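/- arXiv:2104.14672 — 2 statements merged into one kernel-verified Lean document; each statement's English description precedes it below -/
import Mathlib

section
/- Let relu : ℝ → ℝ be defined by relu(y) = max(0, y). Let y₀ ∈ ℝ and let Y ⊆ ℝ be a set such that the set {y ∈ Y | y ≠ y₀} is nonempty and has a greatest element ȳ. Then the set { |relu(y) − relu(y₀)| / |y − y₀| : y ∈ Y, y ≠ y₀ } has greatest element (relu(ȳ) − relu(y₀)) / (ȳ − y₀); in particular the local Lipschitz constant of relu at y₀ over Y equals (relu(ȳ) − relu(y₀)) / (ȳ − y₀). -/
open Set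

section Slope

variable {𝕜 : Type*} [Field 𝕜] [LinearOrder 𝕜] [IsStrictOrderedRing 𝕜] {f : 𝕜 → 𝕜}

theorem Monotone.abs_sub_div_abs_sub (hf : Monotone f) (x a : 𝕜) :
    |f x - f a| / |x - a| = (f x - f a) / (x - a) := by
  rw [← abs_div, abs_of_nonneg]
  simpa only [slope_def_field] using (hf.monotoneOn univ).slope_nonneg (mem_univ a) (mem_univ x)

/-- For a convex function the secant slope from `a` grows with the other endpoint, and for a
monotone one it is nonnegative, so it agrees with its absolute value. -/
theorem isGreatest_abs_slope_of_convexOn_of_monotone (hconv : ConvexOn 𝕜 univ f)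
    (hmono : Monotone f) {Y : Set 𝕜} {a b : 𝕜} (hb : IsGreatest {y ∈ Y | y ≠ a} b) :
    IsGreatest {L : 𝕜 | ∃ y ∈ Y, y ≠ a ∧ L = |f y - f a| / |y - a|}
      ((f b - f a) / (b - a)) := by
  obtain ⟨⟨hbY, hba⟩, hb_max⟩ := hb
  refine ⟨⟨b, hbY, hba, (hmono.abs_sub_div_abs_sub b a).symm⟩, ?_⟩
  rintro L ⟨y, hyY, hya, rfl⟩
  rw [hmono.abs_sub_div_abs_sub]
  exact hconv.secant_mono (mem_univ a) (mem_univ y) (mem_univ b) hya hba (hb_max ⟨hyY, hya⟩)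

end Slope

theorem convexOn_relu : ConvexOn ℝ univ (fun y : ℝ => max 0 y) :=
  (convexOn_const 0 convex_univ).sup (convexOn_id convex_univ)

theorem monotone_relu : Monotone (fun y : ℝ => max 0 y) :=
  fun _ _ h => max_le_max le_rfl h

theorem relu_local_lipschitz_constant
    (y₀ : ℝ) (Y : Set ℝ) (ybar : ℝ)
    (hybar : IsGreatest {y ∈ Y | y ≠ y₀} ybar) :
    IsGreatest {L : ℝ | ∃ y ∈ Y, y ≠ y₀ ∧ L = |max 0 y - max 0 y₀| / |y - y₀|}
      ((max 0 ybar - max 0 y₀) / (ybar - y₀)) :=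
  isGreatest_abs_slope_of_convexOn_of_monotone convexOn_relu monotone_relu hybar
end

section
/- Let k and s be positive integers. For p ∈ ℤ, let N(p) be the number of integers t such that t·s ≤ p < t·s + k (the number of kernel placements, at stride s and kernel size k, whose pooling region covers position p). Then the set { N(p) : p ∈ ℤ } has greatest element ⌈k / s⌉ (the ceiling of k/s). Consequently, for a 2D max pooling function with kernel size k and stride s in each dimension, the maximum number of pooling regions any input element is part of is n_max = ⌈k/s⌉². -/
/-!
The placements covering `p` are exactly the `t` with `(p - k) / s < t ≤ p / s` (floor division),
so `N(p) = ⌊p/s⌋ - ⌊(p-k)/s⌋`. Shifting `p - k` up by `⌈k/s⌉ · s ≥ k` raises its floor by exactly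
`⌈k/s⌉`, which bounds `N(p)`; at `p = k - 1` the covering placements are `t = 0, …, ⌊(k-1)/s⌋`,
which are `⌈k/s⌉` many. In two dimensions the counts multiply, so both factors are maximal at once.
-/

/-- The number of kernel placements (stride `s`, kernel size `k`) whose pooling
region covers position `p`: the number of integers `t` with `t·s ≤ p < t·s + k`. -/
noncomputable def coverCount (k s : ℕ) (p : ℤ) : ℕ :=
  Set.ncard {t : ℤ | t * (s : ℤ) ≤ p ∧ p < t * (s : ℤ) + (k : ℤ)}

lemma Int.ediv_sub_ediv_sub_le {s c d : ℤ} (p : ℤ) (hs : 0 < s) (hd : d ≤ c * s) :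
    p / s - (p - d) / s ≤ c := by
  have : p / s ≤ (p - d + c * s) / s := Int.ediv_le_ediv hs (by omega)
  rw [Int.add_mul_ediv_right _ _ hs.ne'] at this
  omega

section

variable {k s : ℕ}

lemma coverCount_eq_card_Ioc (hs : 0 < s) (p : ℤ) :
    coverCount k s p = (Finset.Ioc ((p - k) / (s : ℤ)) (p / (s : ℤ))).card := by
  have hs' : (0 : ℤ) < s := by exact_mod_cast hs
  rw [coverCount, ← Set.ncard_coe_finset]
  congr 1
  ext t
  simp only [Set.mem_ofPred_eq, Finset.coe_Ioc, Set.mem_Ioc, Int.ediv_lt_iff_lt_mul hs',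
    Int.le_ediv_iff_mul_le hs']
  omega

lemma coverCount_eq (hs : 0 < s) (p : ℤ) :
    coverCount k s p = (p / (s : ℤ) - (p - k) / (s : ℤ)).toNat := by
  rw [coverCount_eq_card_Ioc hs, Int.card_Ioc]

lemma coverCount_le_ceilDiv (hs : 0 < s) (p : ℤ) : coverCount k s p ≤ k ⌈/⌉ s := by
  have hks : (k : ℤ) ≤ (k ⌈/⌉ s : ℕ) * s := by
    exact_mod_cast (le_smul_ceilDiv hs).trans_eq (mul_comm _ _)
  have := Int.ediv_sub_ediv_sub_le p (by exact_mod_cast hs) hks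
  rw [coverCount_eq hs]
  omega

lemma coverCount_pred (hs : 0 < s) : coverCount k s ((k : ℤ) - 1) = k ⌈/⌉ s := by
  have hs' : (0 : ℤ) < s := by exact_mod_cast hs
  have h_neg_one : (-1 : ℤ) / s = -1 := Int.ediv_eq_neg_one_of_neg_of_le (by norm_num) (by omega)
  have h_shift : ((k : ℤ) - 1) / s + 1 = ((k + s - 1 : ℕ) : ℤ) / s := by
    rw [← Int.add_mul_ediv_right _ 1 hs'.ne']
    congr 1
    omega
  rw [coverCount_eq hs, sub_sub_cancel_left, h_neg_one, sub_neg_eq_add, h_shift,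
    ← Int.natCast_ediv, Int.toNat_natCast, Nat.ceilDiv_eq_add_pred_div]

lemma isGreatest_coverCount (hs : 0 < s) :
    IsGreatest {c : ℕ | ∃ p : ℤ, c = coverCount k s p} (k ⌈/⌉ s) :=
  ⟨⟨(k : ℤ) - 1, (coverCount_pred hs).symm⟩, by
    rintro c ⟨p, rfl⟩
    exact coverCount_le_ceilDiv hs p⟩

end

theorem maxpool_cover_count_general
    (k s : ℕ) (hs : 0 < s) :
    IsGreatest {c : ℕ | ∃ p : ℤ, c = coverCount k s p} (k ⌈/⌉ s) ∧
      IsGreatest {c : ℕ | ∃ p q : ℤ, c = coverCount k s p * coverCount k s q}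
        ((k ⌈/⌉ s) ^ 2) := by
  obtain ⟨⟨p₀, hp₀⟩, hbound⟩ := isGreatest_coverCount (k := k) hs
  refine ⟨⟨⟨p₀, hp₀⟩, hbound⟩, ⟨p₀, p₀, by rw [sq, ← hp₀]⟩, ?_⟩
  rintro c ⟨p, q, rfl⟩
  rw [sq]
  exact Nat.mul_le_mul (hbound ⟨p, rfl⟩) (hbound ⟨q, rfl⟩)

theorem maxpool_cover_count
    (k s : ℕ) (hk : 0 < k) (hs : 0 < s) :
    IsGreatest {c : ℕ | ∃ p : ℤ, c = coverCount k s p} (k ⌈/⌉ s) ∧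
      IsGreatest {c : ℕ | ∃ p q : ℤ, c = coverCount k s p * coverCount k s q}
        ((k ⌈/⌉ s) ^ 2) :=
  maxpool_cover_count_general k s hs
end
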